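/- arXiv:1010.4111 — 2 statements merged into one kernel-verified Lean document; each statement's English description precedes it below -/
import Mathlib

section
/- For any ordinals α, γ, β with γ < β and α ≥ 1, (α ⊕ α × 3_2(γ)) × 3_2(γ) ≤ α × 3_2(β), where ⊕ is natural sum and × natural product. -/
open Ordinal

universe u

namespace Ordinal

/-- Natural addition (Hessenberg sum), with its definition from the older Mathlib. -/
noncomputable def nadd : Ordinal.{u} → Ordinal.{u} → Ordinal.{u}
  | a, b => max (⨆ x : Set.Iio a, Order.succ (nadd x.1 b)) (⨆ x : Set.Iio b, Order.succ (nadd a x.1))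
termination_by a b => (a, b)
decreasing_by
  · exact Prod.Lex.left _ _ x.2
  · exact Prod.Lex.right _ x.2

/-- Natural multiplication (Hessenberg product), with its definition from the older Mathlib. -/
noncomputable def nmul : Ordinal.{u} → Ordinal.{u} → Ordinal.{u}
  | a, b => sInf {c | ∀ a' < a, ∀ b' < b, nadd (nmul a' b) (nmul a b') < nadd c (nmul a' b')}
termination_by a b => (a, b)

end Ordinal

infixl:65 " ♯ " => Ordinal.nadd
infixl:70 " ⨳ " => Ordinal.nmul

/-- `3_2(β) := 3^(3^β)` in ordinal exponentiation. -/
noncomputable def threeTwo (β : Ordinal) : Ordinal := (3 : Ordinal) ^ ((3 : Ordinal) ^ β)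

/-!
Since `α ♯ α ⨳ 3₂(γ) = α ⨳ (3₂(γ) ♯ 1)` and `⨳` is associative and monotone, it suffices that
`(3₂(γ) ♯ 1) ⨳ 3₂(γ) ≤ 3₂(γ + 1) = 3₂(γ) ^ 3`. For finite `γ` this is arithmetic in `ℕ`.
For `γ = ω + δ` one has `3₂(γ) = ω ^ μ` with `μ = 3 ^ δ`, and `3₂(γ + 1) = ω ^ (μ * 3)`.
The natural product of `ω`-powers is bounded by the `ω`-power of the natural sum of the exponents,
and every `ω ^ ν` is closed under `♯`; so it remains to see `μ ♯ μ < μ * 3`, which holds because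
`μ` is a single Cantor normal form term `ω ^ q * 3 ^ k`.
-/

open Order

namespace Ordinal

variable {a b c d : Ordinal.{u}}

theorem lt_nadd_iff : a < b ♯ c ↔ (∃ b' < b, a ≤ b' ♯ c) ∨ ∃ c' < c, a ≤ b ♯ c' := by
  rw [nadd.eq_1, lt_max_iff, Ordinal.lt_iSup_iff, Ordinal.lt_iSup_iff]
  simp only [lt_succ_iff, Subtype.exists, Set.mem_Iio, exists_prop]

theorem nadd_le_iff : b ♯ c ≤ a ↔ (∀ b' < b, b' ♯ c < a) ∧ ∀ c' < c, b ♯ c' < a := by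
  rw [← not_lt, lt_nadd_iff]
  simp only [not_or, not_exists, not_and, not_le]

@[gcongr] theorem nadd_lt_nadd_left (h : b < c) (a : Ordinal.{u}) : a ♯ b < a ♯ c :=
  lt_nadd_iff.2 (Or.inr ⟨b, h, le_rfl⟩)

@[gcongr] theorem nadd_lt_nadd_right (h : b < c) (a : Ordinal.{u}) : b ♯ a < c ♯ a :=
  lt_nadd_iff.2 (Or.inl ⟨b, h, le_rfl⟩)

theorem nadd_left_strictMono (a : Ordinal.{u}) : StrictMono (a ♯ ·) :=
  fun _ _ h => nadd_lt_nadd_left h a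

theorem nadd_right_strictMono (a : Ordinal.{u}) : StrictMono (· ♯ a) :=
  fun _ _ h => nadd_lt_nadd_right h a

@[gcongr] theorem nadd_le_nadd_left (h : b ≤ c) (a : Ordinal.{u}) : a ♯ b ≤ a ♯ c :=
  (nadd_left_strictMono a).monotone h

@[gcongr] theorem nadd_le_nadd_right (h : b ≤ c) (a : Ordinal.{u}) : b ♯ a ≤ c ♯ a :=
  (nadd_right_strictMono a).monotone h

theorem nadd_lt_nadd_iff_left (a : Ordinal.{u}) : a ♯ b < a ♯ c ↔ b < c :=
  (nadd_left_strictMono a).lt_iff_lt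

theorem nadd_le_nadd_iff_left (a : Ordinal.{u}) : a ♯ b ≤ a ♯ c ↔ b ≤ c :=
  (nadd_left_strictMono a).le_iff_le

@[gcongr] theorem nadd_le_nadd (h₁ : a ≤ b) (h₂ : c ≤ d) : a ♯ c ≤ b ♯ d :=
  (nadd_le_nadd_left h₂ a).trans (nadd_le_nadd_right h₁ d)

@[gcongr] theorem nadd_lt_nadd_of_lt_of_le (h₁ : a < b) (h₂ : c ≤ d) : a ♯ c < b ♯ d :=
  (nadd_lt_nadd_right h₁ c).trans_le (nadd_le_nadd_left h₂ b)

@[gcongr] theorem nadd_lt_nadd_of_le_of_lt (h₁ : a ≤ b) (h₂ : c < d) : a ♯ c < b ♯ d :=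
  (nadd_le_nadd_right h₁ c).trans_lt (nadd_lt_nadd_left h₂ b)

theorem nadd_comm (a b : Ordinal.{u}) : a ♯ b = b ♯ a := by
  suffices ∀ a b : Ordinal.{u}, a ♯ b ≤ b ♯ a from (this a b).antisymm (this b a)
  intro a b
  induction a using WellFoundedLT.induction generalizing b with | _ a iha =>
  induction b using WellFoundedLT.induction with | _ b ihb =>
  exact nadd_le_iff.2 ⟨fun a' ha' => (iha a' ha' b).trans_lt (nadd_lt_nadd_left ha' b),
    fun b' hb' => (ihb b' hb').trans_lt (nadd_lt_nadd_right hb' a)⟩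

@[simp] theorem nadd_zero (a : Ordinal.{u}) : a ♯ 0 = a := by
  induction a using WellFoundedLT.induction with | _ a ih =>
  refine le_antisymm (nadd_le_iff.2 ⟨fun a' ha' => (ih a' ha').trans_lt ha', by simp⟩) ?_
  exact (nadd_right_strictMono 0).le_apply

@[simp] theorem zero_nadd (a : Ordinal.{u}) : 0 ♯ a = a := by
  rw [nadd_comm, nadd_zero]

theorem le_nadd_self_left : a ≤ a ♯ b := by
  simpa using nadd_le_nadd_left (zero_le (a := b)) a

theorem nadd_succ (a b : Ordinal.{u}) : a ♯ succ b = succ (a ♯ b) := by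
  induction a using WellFoundedLT.induction with | _ a ih =>
  refine le_antisymm (nadd_le_iff.2 ⟨fun a' ha' => ?_, fun b' hb' => ?_⟩)
    (succ_le_of_lt (nadd_lt_nadd_left (lt_succ b) a))
  · rw [ih a' ha']
    exact succ_lt_succ (nadd_lt_nadd_right ha' b)
  · exact lt_succ_iff.2 (nadd_le_nadd_left (lt_succ_iff.1 hb') a)

theorem nadd_assoc (a b c : Ordinal.{u}) : a ♯ b ♯ c = a ♯ (b ♯ c) := by
  apply le_antisymm
  · refine nadd_le_iff.2 ⟨fun x hx => ?_, fun c' hc' => ?_⟩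
    · rcases lt_nadd_iff.1 hx with ⟨a', ha', hx⟩ | ⟨b', hb', hx⟩
      · calc x ♯ c ≤ a' ♯ b ♯ c := by gcongr
          _ = a' ♯ (b ♯ c) := nadd_assoc a' b c
          _ < a ♯ (b ♯ c) := by gcongr
      · calc x ♯ c ≤ a ♯ b' ♯ c := by gcongr
          _ = a ♯ (b' ♯ c) := nadd_assoc a b' c
          _ < a ♯ (b ♯ c) := by gcongr
    · rw [nadd_assoc a b c']
      gcongr
  · refine nadd_le_iff.2 ⟨fun a' ha' => ?_, fun x hx => ?_⟩
    · rw [← nadd_assoc a' b c]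
      gcongr
    · rcases lt_nadd_iff.1 hx with ⟨b', hb', hx⟩ | ⟨c', hc', hx⟩
      · calc a ♯ x ≤ a ♯ (b' ♯ c) := by gcongr
          _ = a ♯ b' ♯ c := (nadd_assoc a b' c).symm
          _ < a ♯ b ♯ c := by gcongr
      · calc a ♯ x ≤ a ♯ (b ♯ c') := by gcongr
          _ = a ♯ b ♯ c' := (nadd_assoc a b c').symm
          _ < a ♯ b ♯ c := by gcongr
termination_by (a, b, c)

instance : Std.Associative (α := Ordinal.{u}) (· ♯ ·) := ⟨nadd_assoc⟩

instance : Std.Commutative (α := Ordinal.{u}) (· ♯ ·) := ⟨nadd_comm⟩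

theorem nadd_right_comm (a b c : Ordinal.{u}) : a ♯ b ♯ c = a ♯ c ♯ b := by
  rw [nadd_assoc, nadd_comm b, ← nadd_assoc]

theorem nadd_natCast (a : Ordinal.{u}) (n : ℕ) : a ♯ n = a + n := by
  induction n with
  | zero => simp
  | succ n ih => rw [Nat.cast_succ, ← add_assoc, ← ih, ← succ_eq_add_one, ← succ_eq_add_one,
      nadd_succ]

theorem add_le_nadd (a b : Ordinal.{u}) : a + b ≤ a ♯ b := by
  induction b using WellFoundedLT.induction with | _ b ih =>
  refine le_of_forall_lt fun c hc => ?_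
  rcases lt_or_ge c a with hca | hac
  · exact hca.trans_le le_nadd_self_left
  · obtain ⟨d, rfl⟩ := exists_add_of_le hac
    have hd : d < b := (add_lt_add_iff_left a).1 hc
    exact (ih d hd).trans_lt (nadd_lt_nadd_left hd a)

theorem nmul_nonempty (a b : Ordinal.{u}) :
    {c : Ordinal.{u} | ∀ a' < a, ∀ b' < b, a' ⨳ b ♯ a ⨳ b' < c ♯ a' ⨳ b'}.Nonempty :=
  ⟨⨆ p : Set.Iio a × Set.Iio b, succ (p.1.1 ⨳ b ♯ a ⨳ p.2.1), fun a' ha' b' hb' =>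
    (lt_succ _).trans_le <| (Ordinal.le_iSup (fun p : Set.Iio a × Set.Iio b =>
      succ (p.1.1 ⨳ b ♯ a ⨳ p.2.1)) (⟨a', ha'⟩, ⟨b', hb'⟩)).trans le_nadd_self_left⟩

theorem nmul_nadd_lt {a' b' : Ordinal.{u}} (ha : a' < a) (hb : b' < b) :
    a' ⨳ b ♯ a ⨳ b' < a ⨳ b ♯ a' ⨳ b' := by
  rw [nmul.eq_1 a b]
  exact csInf_mem (nmul_nonempty a b) a' ha b' hb

theorem nmul_nadd_le {a' b' : Ordinal.{u}} (ha : a' ≤ a) (hb : b' ≤ b) :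
    a' ⨳ b ♯ a ⨳ b' ≤ a ⨳ b ♯ a' ⨳ b' := by
  rcases ha.lt_or_eq with ha | rfl
  · rcases hb.lt_or_eq with hb | rfl
    · exact (nmul_nadd_lt ha hb).le
    · rw [nadd_comm]
  · exact le_rfl

theorem lt_nmul_iff : c < a ⨳ b ↔ ∃ a' < a, ∃ b' < b, c ♯ a' ⨳ b' ≤ a' ⨳ b ♯ a ⨳ b' := by
  refine ⟨fun h => ?_, fun ⟨a', ha, b', hb, h⟩ => ?_⟩
  · rw [nmul.eq_1] at h
    simpa using notMem_of_lt_csInf h ⟨0, fun _ _ => zero_le⟩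
  · have := h.trans_lt (nmul_nadd_lt ha hb)
    rwa [nadd_comm (a ⨳ b), nadd_comm c, nadd_lt_nadd_iff_left] at this

theorem nmul_le_iff : a ⨳ b ≤ c ↔ ∀ a' < a, ∀ b' < b, a' ⨳ b ♯ a ⨳ b' < c ♯ a' ⨳ b' := by
  rw [← not_lt, lt_nmul_iff]
  simp only [not_exists, not_and, not_le]

theorem nmul_comm (a b : Ordinal.{u}) : a ⨳ b = b ⨳ a := by
  refine le_antisymm (nmul_le_iff.2 fun a' ha' b' hb' => ?_) (nmul_le_iff.2 fun b' hb' a' ha' => ?_)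
  · rw [nmul_comm a' b, nmul_comm a b', nmul_comm a' b', nadd_comm (b ⨳ a')]
    exact nmul_nadd_lt hb' ha'
  · rw [← nmul_comm a' b, ← nmul_comm a b', ← nmul_comm a' b', nadd_comm (a ⨳ b')]
    exact nmul_nadd_lt ha' hb'
termination_by (a, b)

@[simp] theorem nmul_zero (a : Ordinal.{u}) : a ⨳ 0 = 0 :=
  nonpos_iff_eq_zero.1 (nmul_le_iff.2 fun _ _ _ h => (not_lt_zero h).elim)

@[simp] theorem zero_nmul (a : Ordinal.{u}) : 0 ⨳ a = 0 := by
  rw [nmul_comm, nmul_zero]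

@[simp] theorem nmul_one (a : Ordinal.{u}) : a ⨳ 1 = a := by
  induction a using WellFoundedLT.induction with | _ a ih =>
  refine le_antisymm (nmul_le_iff.2 fun a' ha' b' hb' => ?_)
    (le_of_forall_lt fun c hc => lt_nmul_iff.2 ⟨c, hc, 0, zero_lt_one, by simp [ih c hc]⟩)
  rw [lt_one_iff.1 hb']
  simpa [ih a' ha'] using ha'

@[simp] theorem one_nmul (a : Ordinal.{u}) : 1 ⨳ a = a := by
  rw [nmul_comm, nmul_one]

theorem nmul_le_nmul_left (h : a ≤ b) (c : Ordinal.{u}) : c ⨳ a ≤ c ⨳ b := by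
  rcases h.lt_or_eq with h | rfl
  · rcases eq_zero_or_pos c with rfl | hc
    · simp
    · exact (lt_nmul_iff.2 ⟨0, hc, a, h, by simp⟩).le
  · exact le_rfl

theorem nmul_le_nmul_right (h : a ≤ b) (c : Ordinal.{u}) : a ⨳ c ≤ b ⨳ c := by
  simpa only [nmul_comm _ c] using nmul_le_nmul_left h c

theorem nmul_nadd (a b c : Ordinal.{u}) : a ⨳ (b ♯ c) = a ⨳ b ♯ a ⨳ c := by
  refine le_antisymm (nmul_le_iff.2 fun a' ha d hd => ?_)
    (nadd_le_iff.2 ⟨fun d hd => ?_, fun d hd => ?_⟩)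
  · rw [nmul_nadd a' b c]
    rcases lt_nadd_iff.1 hd with ⟨b', hb, hd⟩ | ⟨c', hc, hd⟩
    · have := nadd_lt_nadd_of_lt_of_le (nmul_nadd_lt ha hb) (nmul_nadd_le ha.le hd)
      rw [nmul_nadd a' b' c, nmul_nadd a b' c] at this
      refine (nadd_lt_nadd_iff_left (a ⨳ b' ♯ a' ⨳ b')).1 ?_
      convert this using 1 <;> ac_rfl
    · have := nadd_lt_nadd_of_lt_of_le (nmul_nadd_lt ha hc) (nmul_nadd_le ha.le hd)
      rw [nmul_nadd a' b c', nmul_nadd a b c'] at this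
      refine (nadd_lt_nadd_iff_left (a ⨳ c' ♯ a' ⨳ c')).1 ?_
      convert this using 1 <;> ac_rfl
  · obtain ⟨a', ha, b', hb, hd⟩ := lt_nmul_iff.1 hd
    have := nadd_lt_nadd_of_le_of_lt hd (nmul_nadd_lt ha (nadd_lt_nadd_right hb c))
    rw [nmul_nadd a' b c, nmul_nadd a b' c, nmul_nadd a' b' c] at this
    refine (nadd_lt_nadd_iff_left (a' ⨳ b' ♯ a' ⨳ b ♯ a' ⨳ c ♯ a ⨳ b')).1 ?_
    convert this using 1 <;> ac_rfl
  · obtain ⟨a', ha, c', hc, hd⟩ := lt_nmul_iff.1 hd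
    have := nadd_lt_nadd_of_le_of_lt hd (nmul_nadd_lt ha (nadd_lt_nadd_left hc b))
    rw [nmul_nadd a' b c, nmul_nadd a b c', nmul_nadd a' b c'] at this
    refine (nadd_lt_nadd_iff_left (a' ⨳ c' ♯ a' ⨳ b ♯ a' ⨳ c ♯ a ⨳ c')).1 ?_
    convert this using 1 <;> ac_rfl
termination_by (a, b, c)

theorem nadd_nmul (a b c : Ordinal.{u}) : (a ♯ b) ⨳ c = a ⨳ c ♯ b ⨳ c := by
  rw [nmul_comm, nmul_nadd, nmul_comm c, nmul_comm c]

theorem nmul_add_one (a b : Ordinal.{u}) : a ⨳ (b + 1) = a ⨳ b ♯ a := by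
  rw [← Nat.cast_one, ← nadd_natCast, nmul_nadd, Nat.cast_one, nmul_one]

theorem mul_le_nmul (a b : Ordinal.{u}) : a * b ≤ a ⨳ b := by
  induction b using WellFoundedLT.induction with | _ b ih =>
  refine le_of_forall_lt fun c hc => ?_
  obtain ⟨q, hq, r, hr, rfl⟩ := Ordinal.lt_mul_iff.1 hc
  calc a * q + r ≤ a ⨳ q ♯ r := (add_le_add_left (ih q hq) r).trans (add_le_nadd _ _)
    _ < a ⨳ q ♯ a := nadd_lt_nadd_left hr _
    _ = a ⨳ (q + 1) := (nmul_add_one a q).symm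
    _ ≤ a ⨳ b := nmul_le_nmul_left (add_one_le_of_lt hq) a

theorem natCast_nmul_natCast (m n : ℕ) : (m : Ordinal.{u}) ⨳ n = (m * n : ℕ) := by
  induction n with
  | zero => simp
  | succ n ih => rw [Nat.cast_succ, nmul_add_one, ih, nadd_natCast, mul_add_one, Nat.cast_add]

theorem nmul_le_of_forall₃
    (H : ∀ a' < a, ∀ b' < b, ∀ c' < c, a' ⨳ b ⨳ c ♯ a ⨳ b' ⨳ c ♯ a ⨳ b ⨳ c' ♯ a' ⨳ b' ⨳ c' <
      d ♯ a' ⨳ b' ⨳ c ♯ a' ⨳ b ⨳ c' ♯ a ⨳ b' ⨳ c') : a ⨳ b ⨳ c ≤ d := by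
  refine le_of_not_gt fun hlt => ?_
  obtain ⟨e, he, c', hc, H₁⟩ := lt_nmul_iff.1 hlt
  obtain ⟨a', ha, b', hb, H₂⟩ := lt_nmul_iff.1 he
  have H₃ := nmul_nadd_le H₂ hc.le
  simp only [nadd_nmul] at H₃
  have H₄ : (e ⨳ c' ♯ e ⨳ c) ♯ (d ♯ a' ⨳ b' ⨳ c ♯ a' ⨳ b ⨳ c' ♯ a ⨳ b' ⨳ c') ≤
      (e ⨳ c' ♯ e ⨳ c) ♯ (a' ⨳ b ⨳ c ♯ a ⨳ b' ⨳ c ♯ a ⨳ b ⨳ c' ♯ a' ⨳ b' ⨳ c') := by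
    convert nadd_le_nadd H₁ H₃ using 1 <;> ac_rfl
  exact (H a' ha b' hb c' hc).not_ge ((nadd_le_nadd_iff_left _).1 H₄)

theorem nmul_assoc (a b c : Ordinal.{u}) : a ⨳ b ⨳ c = a ⨳ (b ⨳ c) := by
  have le : ∀ {x y z}, x ♯ y ♯ z = a ♯ b ♯ c → x ⨳ y ⨳ z ≤ x ⨳ (y ⨳ z) := by
    intro x y z hs
    refine nmul_le_of_forall₃ fun x' hx y' hy z' hz => ?_
    rw [nmul_assoc x' y z, nmul_assoc x y' z, nmul_assoc x y z', nmul_assoc x' y' z',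
      nmul_assoc x' y' z, nmul_assoc x' y z', nmul_assoc x y' z']
    have := nmul_nadd_lt hx (nmul_nadd_lt hy hz)
    simp only [nmul_nadd] at this
    convert this using 1 <;> ac_rfl
  -- the recursion is on the symmetric quantity `a ♯ b ♯ c`, so `le` also applies to `(c, b, a)`
  refine (le rfl).antisymm ?_
  rw [nmul_comm a, nmul_comm b, nmul_comm (a ⨳ b), nmul_comm a b]
  exact le (by ac_rfl)
termination_by a ♯ b ♯ c
decreasing_by all_goals rw [← hs]; gcongr

theorem nmul_right_comm (a b c : Ordinal.{u}) : a ⨳ b ⨳ c = a ⨳ c ⨳ b := by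
  rw [nmul_assoc, nmul_comm b, ← nmul_assoc]

theorem IsPrincipal.mul_nadd_of_lt {p r : Ordinal.{u}} (hp : IsPrincipal (· ♯ ·) p) (hr : r < p)
    (c : Ordinal.{u}) : p * c ♯ r = p * c + r := by
  refine le_antisymm (nadd_le_iff.2 ⟨fun x hx => ?_, fun r' hr' => ?_⟩) (add_le_nadd _ _)
  · obtain ⟨q, hq, s, hs, rfl⟩ := Ordinal.lt_mul_iff.1 hx
    calc (p * q + s) ♯ r ≤ p * q ♯ (s ♯ r) := by rw [← nadd_assoc]; gcongr; exact add_le_nadd _ _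
      _ = p * q + (s ♯ r) := hp.mul_nadd_of_lt (hp hs hr) q
      _ < p * q + p := add_lt_add_right (hp hs hr) _
      _ = p * (q + 1) := (mul_add_one p q).symm
      _ ≤ p * c + r := (mul_le_mul_right (add_one_le_of_lt hq) p).trans (le_add_right le_rfl)
  · rw [hp.mul_nadd_of_lt (hr'.trans hr) c]
    gcongr
termination_by (c, r)

theorem IsPrincipal.mul_nadd_mul_le {p : Ordinal.{u}} (hp : IsPrincipal (· ♯ ·) p)
    (c d : Ordinal.{u}) : p * c ♯ p * d ≤ p * (c ♯ d) := by
  have step : ∀ {q e}, q < e → ∀ s < p, p * q ♯ s < p * e := fun {q e} hqe s hs => by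
    rw [hp.mul_nadd_of_lt hs]
    exact (add_lt_add_right hs _).trans_le ((mul_add_one p q).symm.trans_le
      (mul_le_mul_right (add_one_le_of_lt hqe) p))
  refine nadd_le_iff.2 ⟨fun x hx => ?_, fun y hy => ?_⟩
  · obtain ⟨q, hq, s, hs, rfl⟩ := Ordinal.lt_mul_iff.1 hx
    calc (p * q + s) ♯ p * d ≤ p * q ♯ p * d ♯ s := by
          rw [nadd_right_comm]; gcongr; exact add_le_nadd _ _
      _ ≤ p * (q ♯ d) ♯ s := by gcongr; exact hp.mul_nadd_mul_le q d
      _ < p * (c ♯ d) := step (nadd_lt_nadd_right hq d) s hs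
  · obtain ⟨q, hq, s, hs, rfl⟩ := Ordinal.lt_mul_iff.1 hy
    calc p * c ♯ (p * q + s) ≤ p * c ♯ p * q ♯ s := by
          rw [nadd_assoc]; gcongr; exact add_le_nadd _ _
      _ ≤ p * (c ♯ q) ♯ s := by gcongr; exact hp.mul_nadd_mul_le c q
      _ < p * (c ♯ d) := step (nadd_lt_nadd_left hq c) s hs
termination_by (c, d)

theorem IsPrincipal.nmul_natCast_lt {p x : Ordinal.{u}} (hp : IsPrincipal (· ♯ ·) p)
    (hx : x < p) (n : ℕ) : x ⨳ n < p := by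
  induction n with
  | zero => simpa using (zero_le (a := x)).trans_lt hx
  | succ n ih => rw [Nat.cast_succ, nmul_add_one]; exact hp ih hx

theorem isPrincipal_nadd_omega0_opow (e : Ordinal.{u}) : IsPrincipal (· ♯ ·) (ω ^ e) := by
  induction e using WellFoundedLT.induction with | _ e ih =>
  intro x y hx hy
  rcases eq_or_ne e 0 with rfl | he
  · simp_all [lt_one_iff]
  obtain ⟨d, hd, n, hn⟩ := (lt_omega0_opow he).1 (max_lt hx hy)
  calc x ♯ y ≤ ω ^ d * n ♯ ω ^ d * n := nadd_le_nadd ((le_max_left x y).trans hn.le)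
        ((le_max_right x y).trans hn.le)
    _ ≤ ω ^ d * (n ♯ n) := (ih d hd).mul_nadd_mul_le _ _
    _ = ω ^ d * (n + n : ℕ) := by rw [nadd_natCast, Nat.cast_add]
    _ < ω ^ e := opow_mul_lt_opow (natCast_lt_omega0 _) hd

theorem omega0_opow_nmul_omega0_opow_le (a b : Ordinal.{u}) : ω ^ a ⨳ ω ^ b ≤ ω ^ (a ♯ b) := by
  have key : ∀ {a' b'}, a' ♯ b' = a ♯ b → ∀ x < ω ^ a', x ⨳ ω ^ b' < ω ^ (a ♯ b) := by
    intro a' b' hs x hx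
    rcases eq_or_ne a' 0 with rfl | ha'
    · simp_all [lt_one_iff, opow_pos]
    obtain ⟨d, hd, n, hn⟩ := (lt_omega0_opow ha').1 hx
    calc x ⨳ ω ^ b' ≤ (ω ^ d ⨳ n) ⨳ ω ^ b' := nmul_le_nmul_right (hn.le.trans (mul_le_nmul _ _)) _
      _ = (ω ^ d ⨳ ω ^ b') ⨳ n := nmul_right_comm _ _ _
      _ ≤ ω ^ (d ♯ b') ⨳ n := nmul_le_nmul_right (omega0_opow_nmul_omega0_opow_le d b') _
      _ < ω ^ (a ♯ b) := (isPrincipal_nadd_omega0_opow _).nmul_natCast_lt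
          ((isNormal_opow one_lt_omega0).strictMono (hs ▸ nadd_lt_nadd_right hd b')) n
  refine nmul_le_iff.2 fun x hx y hy => lt_of_lt_of_le ?_ le_nadd_self_left
  rw [nmul_comm _ y]
  exact isPrincipal_nadd_omega0_opow _ (key rfl x hx) (key (nadd_comm b a) y hy)
termination_by a ♯ b
decreasing_by rw [← hs]; gcongr

theorem three_opow_omega0 : (3 : Ordinal.{u}) ^ ω = ω :=
  opow_omega0 (by norm_num) (by simpa using natCast_lt_omega0 3)

theorem three_opow_natCast (k : ℕ) : (3 : Ordinal.{u}) ^ (k : Ordinal.{u}) = (3 ^ k : ℕ) := by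
  rw [opow_natCast, natCast_pow, Nat.cast_ofNat]

theorem three_opow_nadd_self_lt (δ : Ordinal.{u}) : (3 : Ordinal.{u}) ^ δ ♯ 3 ^ δ < 3 ^ δ * 3 := by
  obtain ⟨k, hk⟩ := lt_omega0.1 (mod_lt δ omega0_ne_zero)
  -- `3 ^ δ = ω ^ (δ / ω) * 3 ^ k`, a single Cantor normal form term
  rw [← div_add_mod δ ω, hk, opow_add, opow_mul, three_opow_omega0, three_opow_natCast]
  have hpos : 0 < ω ^ (δ / ω) := opow_pos _ omega0_pos
  calc ω ^ (δ / ω) * (3 ^ k : ℕ) ♯ ω ^ (δ / ω) * (3 ^ k : ℕ)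
        ≤ ω ^ (δ / ω) * (3 ^ k + 3 ^ k : ℕ) := by
        rw [Nat.cast_add, ← nadd_natCast]
        exact (isPrincipal_nadd_omega0_opow _).mul_nadd_mul_le _ _
    _ < ω ^ (δ / ω) * (3 ^ k * 3 : ℕ) := (mul_lt_mul_iff_of_pos_left hpos).2
        (by have : 0 < 3 ^ k := by positivity
            exact_mod_cast (by omega : 3 ^ k + 3 ^ k < 3 ^ k * 3))
    _ = ω ^ (δ / ω) * (3 ^ k : ℕ) * 3 := by rw [natCast_mul, Nat.cast_ofNat, mul_assoc]

theorem omega0_opow_nadd_one_nmul_lt {μ ν : Ordinal.{u}} (h : μ ♯ μ < ν) :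
    (ω ^ μ ♯ 1) ⨳ ω ^ μ < ω ^ ν := by
  have hω := (isNormal_opow one_lt_omega0).strictMono
  rw [nadd_nmul, one_nmul]
  exact isPrincipal_nadd_omega0_opow ν ((omega0_opow_nmul_omega0_opow_le μ μ).trans_lt (hω h))
    (hω (le_nadd_self_left.trans_lt h))

end Ordinal

theorem threeTwo_natCast (n : ℕ) : threeTwo n = (3 ^ 3 ^ n : ℕ) := by
  rw [threeTwo, three_opow_natCast, three_opow_natCast]

theorem threeTwo_omega0_add (δ : Ordinal) : threeTwo (ω + δ) = ω ^ ((3 : Ordinal) ^ δ) := by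
  rw [threeTwo, opow_add, three_opow_omega0, opow_mul, three_opow_omega0]

theorem threeTwo_monotone : Monotone threeTwo := fun _ _ h =>
  opow_le_opow_right (by norm_num) (opow_le_opow_right (by norm_num) h)

theorem nadd_one_nmul_threeTwo_le (γ : Ordinal) :
    (threeTwo γ ♯ 1) ⨳ threeTwo γ ≤ threeTwo (γ + 1) := by
  rcases lt_or_ge γ ω with hγ | hγ
  · obtain ⟨n, rfl⟩ := lt_omega0.1 hγ
    rw [← Nat.cast_succ, threeTwo_natCast, threeTwo_natCast, ← Nat.cast_one, nadd_natCast,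
      ← Nat.cast_add, natCast_nmul_natCast]
    have ht : 3 ≤ 3 ^ 3 ^ n := Nat.le_self_pow (by positivity) 3
    rw [pow_succ, pow_mul]
    exact_mod_cast (by nlinarith [Nat.mul_le_mul_right (3 ^ 3 ^ n * 3 ^ 3 ^ n) ht] :
      (3 ^ 3 ^ n + 1) * 3 ^ 3 ^ n ≤ (3 ^ 3 ^ n) ^ 3)
  · obtain ⟨δ, rfl⟩ := exists_add_of_le hγ
    rw [add_assoc, threeTwo_omega0_add, threeTwo_omega0_add, ← succ_eq_add_one, opow_succ]
    exact (omega0_opow_nadd_one_nmul_lt (three_opow_nadd_self_lt δ)).le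

theorem nadd_nmul_threeTwo_le_general {α γ β : Ordinal} (h : γ < β) :
    (α ♯ α ⨳ threeTwo γ) ⨳ threeTwo γ ≤ α ⨳ threeTwo β :=
  calc (α ♯ α ⨳ threeTwo γ) ⨳ threeTwo γ = α ⨳ ((threeTwo γ ♯ 1) ⨳ threeTwo γ) := by
        rw [← nmul_assoc, nmul_nadd, nmul_one, nadd_comm α]
    _ ≤ α ⨳ threeTwo (γ + 1) := nmul_le_nmul_left (nadd_one_nmul_threeTwo_le γ) α
    _ ≤ α ⨳ threeTwo β := nmul_le_nmul_left (threeTwo_monotone (add_one_le_of_lt h)) α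

/-- For ordinals `α, γ, β` with `γ < β` and `α ≥ 1`,
`(α ♯ α ⨳ 3_2(γ)) ⨳ 3_2(γ) ≤ α ⨳ 3_2(β)`, with natural sum `♯` and natural product `⨳`. -/
theorem nadd_nmul_threeTwo_le {α γ β : Ordinal} (h : γ < β) (hα : 1 ≤ α) :
    (α ♯ α ⨳ threeTwo γ) ⨳ threeTwo γ ≤ α ⨳ threeTwo β :=
  nadd_nmul_threeTwo_le_general h
end

section
/- Inversion with negative antecedents (disjunction): in the infinitary intuitionistic calculus for arithmetic, if ⊢^α_1 Γ ⇒ B₀ ∨ B₁ and every formula in Γ is a negative formula (no ∨ or ∃ occurs in it), then ⊢^α_1 Γ ⇒ B_i for some i ∈ {0,1}. -/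
open Ordinal

/-- Sentences of `L_HA`: closed equations (closed terms identified with their numeral
values), propositional connectives, and quantifiers represented by their ω-many
numeral instances. -/
inductive Sent : Type
  | eq (n m : ℕ)           -- the closed equation `n̄ = m̄`
  | or (A B : Sent)
  | and (A B : Sent)
  | imp (A B : Sent)
  | ex (B : ℕ → Sent)      -- `∃x B(x)`, given by its instances `B(n̄)`
  | all (B : ℕ → Sent)     -- `∀x B(x)`, given by its instances `B(n̄)`

/-- Negative sentences: no disjunction and no existential quantifier occurs. -/
def isNegative : Sent → Prop
  | .eq _ _ => True
  | .or _ _ => False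
  | .and A B => isNegative A ∧ isNegative B
  | .imp A B => isNegative A ∧ isNegative B
  | .ex _ => False
  | .all B => ∀ n, isNegative (B n)

/-- `Deriv cutOK α Γ C` : in the infinitary sequent calculus `HA^∞` (ω-rules for `L∃`
and `R∀`), the sequent `Γ ⇒ C` has a derivation of depth `≤ α` in which every cut
formula satisfies `cutOK`.  Initial sequents: `Γ, ⊥ ⇒ A` and `Γ ⇒ ⊤`. -/
inductive Deriv (cutOK : Sent → Prop) : Ordinal → Set Sent → Sent → Prop
  | axBot {α Γ C n m} : n ≠ m → Sent.eq n m ∈ Γ → Deriv cutOK α Γ C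
  | axTop {α Γ n} : Deriv cutOK α Γ (.eq n n)
  | orL {α γ₀ γ₁ Γ A₀ A₁ C} : γ₀ < α → γ₁ < α →
      Deriv cutOK γ₀ (insert A₀ Γ) C → Deriv cutOK γ₁ (insert A₁ Γ) C →
      Deriv cutOK α (insert (.or A₀ A₁) Γ) C
  | orR₀ {α γ Γ A₀ A₁} : γ < α → Deriv cutOK γ Γ A₀ → Deriv cutOK α Γ (.or A₀ A₁)
  | orR₁ {α γ Γ A₀ A₁} : γ < α → Deriv cutOK γ Γ A₁ → Deriv cutOK α Γ (.or A₀ A₁)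
  | andL₀ {α γ Γ A₀ A₁ C} : γ < α →
      Deriv cutOK γ (insert A₀ (insert (.and A₀ A₁) Γ)) C →
      Deriv cutOK α (insert (.and A₀ A₁) Γ) C
  | andL₁ {α γ Γ A₀ A₁ C} : γ < α →
      Deriv cutOK γ (insert A₁ (insert (.and A₀ A₁) Γ)) C →
      Deriv cutOK α (insert (.and A₀ A₁) Γ) C
  | andR {α γ₀ γ₁ Γ A₀ A₁} : γ₀ < α → γ₁ < α →
      Deriv cutOK γ₀ Γ A₀ → Deriv cutOK γ₁ Γ A₁ → Deriv cutOK α Γ (.and A₀ A₁)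
  | impL {α γ₀ γ₁ Γ A B C} : γ₀ < α → γ₁ < α →
      Deriv cutOK γ₀ (insert (.imp A B) Γ) A → Deriv cutOK γ₁ (insert B Γ) C →
      Deriv cutOK α (insert (.imp A B) Γ) C
  | impR {α γ Γ A B} : γ < α → Deriv cutOK γ (insert A Γ) B →
      Deriv cutOK α Γ (.imp A B)
  | exL {α Γ B C} (γ : ℕ → Ordinal) : (∀ n, γ n < α) →
      (∀ n, Deriv cutOK (γ n) (insert (B n) Γ) C) →
      Deriv cutOK α (insert (.ex B) Γ) C
  | exR {α γ Γ B} (n : ℕ) : γ < α → Deriv cutOK γ Γ (B n) →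
      Deriv cutOK α Γ (.ex B)
  | allL {α γ Γ B C} (n : ℕ) : γ < α →
      Deriv cutOK γ (insert (B n) (insert (.all B) Γ)) C →
      Deriv cutOK α (insert (.all B) Γ) C
  | allR {α Γ B} (γ : ℕ → Ordinal) : (∀ n, γ n < α) →
      (∀ n, Deriv cutOK (γ n) Γ (B n)) → Deriv cutOK α Γ (.all B)
  | cut {α γ₀ γ₁ Γ Δ A C} : cutOK A → γ₀ < α → γ₁ < α →
      Deriv cutOK γ₀ Γ A → Deriv cutOK γ₁ (insert A Δ) C →
      Deriv cutOK α (Γ ∪ Δ) C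

/-- `⊢^α_1 Γ ⇒ C` : derivability with depth `≤ α` and all cut formulas of rank `0`,
i.e. negative cut formulas. -/
def Deriv1 (α : Ordinal) (Γ : Set Sent) (C : Sent) : Prop := Deriv isNegative α Γ C

theorem Deriv.mono {c : Sent → Prop} {γ α : Ordinal} {Γ : Set Sent} {C : Sent}
    (h : Deriv c γ Γ C) (hγα : γ ≤ α) : Deriv c α Γ C := by
  cases h with
  | axBot hnm hmem => exact .axBot hnm hmem
  | axTop => exact .axTop
  | orL h₀ h₁ d₀ d₁ => exact .orL (h₀.trans_le hγα) (h₁.trans_le hγα) d₀ d₁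
  | orR₀ h₀ d₀ => exact .orR₀ (h₀.trans_le hγα) d₀
  | orR₁ h₀ d₀ => exact .orR₁ (h₀.trans_le hγα) d₀
  | andL₀ h₀ d₀ => exact .andL₀ (h₀.trans_le hγα) d₀
  | andL₁ h₀ d₀ => exact .andL₁ (h₀.trans_le hγα) d₀
  | andR h₀ h₁ d₀ d₁ => exact .andR (h₀.trans_le hγα) (h₁.trans_le hγα) d₀ d₁
  | impL h₀ h₁ d₀ d₁ => exact .impL (h₀.trans_le hγα) (h₁.trans_le hγα) d₀ d₁
  | impR h₀ d₀ => exact .impR (h₀.trans_le hγα) d₀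
  | exL γ h₀ d₀ => exact .exL γ (fun n => (h₀ n).trans_le hγα) d₀
  | exR n h₀ d₀ => exact .exR n (h₀.trans_le hγα) d₀
  | allL n h₀ d₀ => exact .allL n (h₀.trans_le hγα) d₀
  | allR γ h₀ d₀ => exact .allR γ (fun n => (h₀ n).trans_le hγα) d₀
  | cut hA h₀ h₁ d₀ d₁ => exact .cut hA (h₀.trans_le hγα) (h₁.trans_le hγα) d₀ d₁

/- With negative antecedents the last inference is either `∨R`, an axiom, or a left rule or
cut whose premise for the succedent `B₀ ∨ B₁` again has negative antecedents (`∨L` and `∃L`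
cannot occur); in the latter case the inverted premise is put back under the same rule. -/
theorem Deriv.or_inversion_of_forall_isNegative {c : Sent → Prop}
    (hc : ∀ A, c A → isNegative A) {α : Ordinal} {Γ : Set Sent} {B₀ B₁ : Sent}
    (h : Deriv c α Γ (.or B₀ B₁)) (hΓ : ∀ A ∈ Γ, isNegative A) :
    Deriv c α Γ B₀ ∨ Deriv c α Γ B₁ := by
  generalize hC : Sent.or B₀ B₁ = C at h
  induction h with
  | axBot hnm hmem => exact .inl (.axBot hnm hmem)
  | axTop | andR | impR | exR | allR => cases hC
  | orL | exL => exact (hΓ _ (Set.mem_insert _ _)).elim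
  | orR₀ hγ d => cases hC; exact .inl (d.mono hγ.le)
  | orR₁ hγ d => cases hC; exact .inr (d.mono hγ.le)
  | andL₀ hγ _ ih =>
    obtain ⟨hA, -⟩ := Set.forall_mem_insert.1 hΓ
    exact (ih (Set.forall_mem_insert.2 ⟨hA.1, hΓ⟩) hC).imp (.andL₀ hγ) (.andL₀ hγ)
  | andL₁ hγ _ ih =>
    obtain ⟨hA, -⟩ := Set.forall_mem_insert.1 hΓ
    exact (ih (Set.forall_mem_insert.2 ⟨hA.2, hΓ⟩) hC).imp (.andL₁ hγ) (.andL₁ hγ)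
  | impL hγ₀ hγ₁ d₀ _ _ ih =>
    obtain ⟨hA, hΓ'⟩ := Set.forall_mem_insert.1 hΓ
    exact (ih (Set.forall_mem_insert.2 ⟨hA.2, hΓ'⟩) hC).imp
      (.impL hγ₀ hγ₁ d₀) (.impL hγ₀ hγ₁ d₀)
  | allL n hγ _ ih =>
    obtain ⟨hA, -⟩ := Set.forall_mem_insert.1 hΓ
    exact (ih (Set.forall_mem_insert.2 ⟨hA n, hΓ⟩) hC).imp (.allL n hγ) (.allL n hγ)
  | cut hA hγ₀ hγ₁ d₀ _ _ ih =>
    have hΔ := fun X hX => hΓ X (Set.mem_union_right _ hX)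
    exact (ih (Set.forall_mem_insert.2 ⟨hc _ hA, hΔ⟩) hC).imp
      (.cut hA hγ₀ hγ₁ d₀) (.cut hA hγ₀ hγ₁ d₀)

/-- Inversion with negative antecedents (disjunction): if `⊢^α_1 Γ ⇒ B₀ ∨ B₁` and
every formula of `Γ` is negative, then `⊢^α_1 Γ ⇒ B₀` or `⊢^α_1 Γ ⇒ B₁`. -/
theorem inversion_or_negative {α : Ordinal} {Γ : Set Sent} {B₀ B₁ : Sent}
    (hΓ : ∀ A ∈ Γ, isNegative A) (h : Deriv1 α Γ (.or B₀ B₁)) :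
    Deriv1 α Γ B₀ ∨ Deriv1 α Γ B₁ :=
  Deriv.or_inversion_of_forall_isNegative (fun _ => id) h hΓ
end
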